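/- Let P be a poset and V a persistence module indexed by P with two interval decompositions V = ⊕_{U ∈ A} U and V = ⊕_{W ∈ B} W. Let I be an interval in P, let C = {U ∈ A | U ≅ M(I)} and D = {W ∈ B | W ≇ M(I)}. Then (⊕_{U ∈ C} U) ∩ (⊕_{W ∈ D} W) = 0, i.e. for every x ∈ P the intersection of the subspaces ⊕_{U ∈ C} U_x and ⊕_{W ∈ D} W_x of V_x is zero. -/

import Mathlib

universe u v w w'

/-- A persistence module indexed by a poset `P`, over a field `k`. -/
structure PersMod (k : Type u) [Field k] (P : Type v) [PartialOrder P] :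
    Type (max u v (w + 1)) where
  space : P → Type w
  [acg : ∀ x, AddCommGroup (space x)]
  [mod : ∀ x, Module k (space x)]
  map : ∀ {x y : P}, x ≤ y → (space x →ₗ[k] space y)
  map_id : ∀ x : P, map (le_refl x) = LinearMap.id
  map_comp : ∀ {x y z : P} (hxy : x ≤ y) (hyz : y ≤ z),
    (map hyz).comp (map hxy) = map (hxy.trans hyz)

attribute [instance] PersMod.acg PersMod.mod

variable (k : Type u) [Field k] {P : Type v} [PartialOrder P]

/-- A morphism of persistence modules (a natural transformation). -/
structure PersHom (V : PersMod.{u, v, w} k P) (W : PersMod.{u, v, w'} k P) where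
  app : ∀ x : P, V.space x →ₗ[k] W.space x
  natural : ∀ {x y : P} (h : x ≤ y) (v : V.space x),
    app y (V.map h v) = W.map h (app x v)

/-- An isomorphism of persistence modules. -/
structure PersIso (V : PersMod.{u, v, w} k P) (W : PersMod.{u, v, w'} k P) where
  app : ∀ x : P, V.space x ≃ₗ[k] W.space x
  natural : ∀ {x y : P} (h : x ≤ y) (v : V.space x),
    app y (V.map h v) = W.map h (app x v)

/-- A subset `I` of a poset is convex if `x ≤ y ≤ z`, `x ∈ I`, `z ∈ I` imply `y ∈ I`. -/
def IsConvexIn (I : Set P) : Prop :=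
  ∀ ⦃x y z : P⦄, x ∈ I → z ∈ I → x ≤ y → y ≤ z → y ∈ I

/-- A subset `I` of a poset is connected if any two points of `I` are joined by a
zigzag path inside `I`. -/
def IsConnectedIn (I : Set P) : Prop :=
  ∀ x ∈ I, ∀ z ∈ I, ∃ (n : ℕ) (c : ℕ → P), (∀ i ≤ n, c i ∈ I) ∧ c 0 = x ∧ c n = z ∧
    ∀ i < n, c i ≤ c (i + 1) ∨ c (i + 1) ≤ c i

/-- An interval in a poset: nonempty, convex and connected. -/
def IsPosetInterval (I : Set P) : Prop :=
  I.Nonempty ∧ IsConvexIn I ∧ IsConnectedIn I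

open Classical in
/-- The subspace of `k` used as the value of the constant module at `x`. -/
noncomputable def constSub (I : Set P) (x : P) : Submodule k k :=
  if x ∈ I then ⊤ else ⊥

open Classical in
/-- The structure map of the constant module. -/
noncomputable def constMap (I : Set P) (x y : P) :
    constSub k I x →ₗ[k] constSub k I y :=
  LinearMap.codRestrict (constSub k I y)
    ((if y ∈ I then (LinearMap.id : k →ₗ[k] k) else 0).comp (constSub k I x).subtype)
    (fun c => by
      by_cases hy : y ∈ I
      · simp [constSub, hy]
      · simp only [constSub, hy, if_false]
        exact Submodule.zero_mem _)

open Classical in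
/-- The constant (interval) module `M(I)` attached to a convex subset `I`. -/
noncomputable def constMod (I : Set P) (hI : IsConvexIn I) : PersMod.{u, v, u} k P where
  space x := constSub k I x
  map {x y} _ := constMap k I x y
  map_id := fun x => by
    ext c
    by_cases hx : x ∈ I
    · simp [constMap, hx]
    · have hc : (c : k) = 0 := by
        have := c.2
        simp only [constSub, hx, if_false] at this
        exact (Submodule.mem_bot k).mp this
      simp [constMap, hx, hc]
  map_comp := fun {x y z} hxy hyz => by
    ext c
    by_cases hz : z ∈ I
    · by_cases hy : y ∈ I
      · simp [constMap, hy, hz]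
      · have hx : x ∉ I := fun hx => hy (hI hx hz hxy hyz)
        have hc : (c : k) = 0 := by
          have := c.2
          simp only [constSub, hx, if_false] at this
          exact (Submodule.mem_bot k).mp this
        simp [constMap, hy, hz, hc]
    · simp [constMap, hz]

/-- A submodule of a persistence module: a family of subspaces preserved by the
structure maps. -/
structure PersSubmod (V : PersMod.{u, v, w} k P) where
  carrier : ∀ x : P, Submodule k (V.space x)
  mapLe : ∀ {x y : P} (h : x ≤ y), ∀ v ∈ carrier x, V.map h v ∈ carrier y

/-- A submodule of a persistence module, viewed as a persistence module in its own
right. -/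
def PersSubmod.toPersMod {V : PersMod.{u, v, w} k P} (U : PersSubmod k V) :
    PersMod.{u, v, w} k P where
  space x := U.carrier x
  map {x y} h := (V.map h).restrict (U.mapLe h)
  map_id := fun x => by
    ext c
    simp [LinearMap.restrict_apply, V.map_id]
  map_comp := fun {x y z} hxy hyz => by
    ext c
    have := LinearMap.congr_fun (V.map_comp hxy hyz) (c : V.space x)
    simpa [LinearMap.restrict_apply] using this

/-- A persistence module is an interval module if it is isomorphic to a constant
module `M(I)` for some interval `I`. -/
def IsIntervalModule (V : PersMod.{u, v, w} k P) : Prop :=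
  ∃ (I : Set P) (hI : IsPosetInterval I), Nonempty (PersIso k V (constMod k I hI.2.1))

/-- `A` is an internal direct sum decomposition of `V`:
at each point the subspaces are independent and span everything. -/
def IsDecomp (V : PersMod.{u, v, w} k P) (A : Set (PersSubmod k V)) : Prop :=
  ∀ x : P, iSupIndep (fun U : A => (U : PersSubmod k V).carrier x) ∧
    ⨆ U : A, (U : PersSubmod k V).carrier x = ⊤

/-- An interval decomposition of `V`. -/
def IsIntervalDecomp (V : PersMod.{u, v, w} k P) (A : Set (PersSubmod k V)) : Prop :=
  IsDecomp k V A ∧ ∀ U ∈ A, IsIntervalModule k U.toPersMod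

/-- `V` has an interval decomposition. -/
def HasIntervalDecomp (V : PersMod.{u, v, w} k P) : Prop :=
  ∃ A : Set (PersSubmod k V), IsIntervalDecomp k V A

/-! Projecting `V_x` onto a summand of a direct sum decomposition is natural in `x`, so the
projections are morphisms of persistence modules. Because an interval is connected, every
endomorphism of `M(I)` is a scalar; hence a composite `M(I) → M(J) → M(I)` is either zero or
invertible, and in the second case `M(I) ≅ M(J)`. So for summands `U, U₀ ≅ M(I)` of `A` and
`W ≇ M(I)` of `B`, the composite `π_{U₀} ∘ π_W` vanishes on `U`. Now let `v` lie in both sums.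
Its projection onto a summand of `A` outside `C` is zero, and for `U₀ ∈ C` we have
`π_{U₀} v = ∑_W π_{U₀} (π_W v)`, where the terms with `W ∉ D` vanish because `v ∈ ⊕_D` and the
remaining ones because `v ∈ ⊕_C`. Hence `v = 0`. -/

universe w''

section Morphisms

variable {k}

@[simps]
def PersHom.comp {X : PersMod.{u, v, w} k P} {Y : PersMod.{u, v, w'} k P}
    {Z : PersMod.{u, v, w''} k P} (g : PersHom k Y Z) (f : PersHom k X Y) : PersHom k X Z where
  app x := (g.app x).comp (f.app x)
  natural h v := by simp [f.natural, g.natural]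

@[simps]
def PersIso.toHom {X : PersMod.{u, v, w} k P} {Y : PersMod.{u, v, w'} k P}
    (e : PersIso k X Y) : PersHom k X Y where
  app x := e.app x
  natural := e.natural

@[simps]
def PersIso.symm {X : PersMod.{u, v, w} k P} {Y : PersMod.{u, v, w'} k P}
    (e : PersIso k X Y) : PersIso k Y X where
  app x := (e.app x).symm
  natural h y := (e.app _).injective (by simp [e.natural])

def PersIso.trans {X : PersMod.{u, v, w} k P} {Y : PersMod.{u, v, w'} k P}
    {Z : PersMod.{u, v, w''} k P} (e : PersIso k X Y) (e' : PersIso k Y Z) : PersIso k X Z where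
  app x := (e.app x).trans (e'.app x)
  natural h v := by simp [e.natural, e'.natural]

def PersSubmod.inclusion {V : PersMod.{u, v, w} k P} (S : PersSubmod k V) :
    PersHom k S.toPersMod V where
  app x := (S.carrier x).subtype
  natural _ _ := rfl

theorem PersIso.nonempty_of_comp_eq_smul {X : PersMod.{u, v, w} k P}
    {Y : PersMod.{u, v, w'} k P} (f : PersHom k X Y) (g : PersHom k Y X) {c d : k}
    (hc : c ≠ 0) (hgf : ∀ x v, g.app x (f.app x v) = c • v)
    (hfg : ∀ x w, f.app x (g.app x w) = d • w) {x₀ : P} {v₀ : X.space x₀} (hv₀ : v₀ ≠ 0) :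
    Nonempty (PersIso k X Y) := by
  have hfv₀ : f.app x₀ v₀ ≠ 0 := fun h0 => by
    have h := hgf x₀ v₀
    rw [h0, map_zero] at h
    exact hv₀ ((smul_eq_zero.mp h.symm).resolve_left hc)
  -- `f ∘ g ∘ f` is both `c • f` and `d • f`
  have hdc : d = c := by
    have h := hfg x₀ (f.app x₀ v₀)
    rw [hgf, map_smul] at h
    exact (smul_left_injective k hfv₀ h).symm
  refine ⟨{ app := fun x => LinearEquiv.ofLinearMap (f.app x) (c⁻¹ • g.app x) ?_ ?_,
            natural := f.natural }⟩
  · ext w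
    simp [hfg, hdc, smul_smul, hc]
  · ext v
    simp [hgf, smul_smul, hc]

end Morphisms

theorem IsConnectedIn.constant {I : Set P} (hI : IsConnectedIn I) {α : Sort*} {f : I → α}
    (hf : ∀ x y : I, x ≤ y → f x = f y) (x y : I) : f x = f y := by
  obtain ⟨n, c, hcI, hc0, hcn, hzig⟩ := hI x x.2 y y.2
  have hchain : ∀ i (hi : i ≤ n), f ⟨c i, hcI i hi⟩ = f x := by
    intro i
    induction i with
    | zero => intro _; simp only [hc0]
    | succ i ih =>
      intro hi
      rw [← ih (by omega)]
      rcases hzig i (by omega) with hle | hle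
      · exact (hf _ _ hle).symm
      · exact hf _ _ hle
  simpa [hcn] using (hchain n le_rfl).symm

section ConstMod

variable {k} {I : Set P} (hI : IsConvexIn I)

noncomputable def constMod.val (x : P) : (constMod k I hI).space x →ₗ[k] k :=
  (constSub k I x).subtype

theorem constMod.val_injective (x : P) : Function.Injective (constMod.val (k := k) hI x) :=
  Subtype.val_injective

noncomputable def constMod.one {x : P} (hx : x ∈ I) : (constMod k I hI).space x :=
  show constSub k I x from ⟨1, by simp [constSub, hx]⟩

theorem constMod.val_one {x : P} (hx : x ∈ I) :
    constMod.val (k := k) hI x (constMod.one hI hx) = 1 :=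
  rfl

theorem constMod.one_ne_zero {x : P} (hx : x ∈ I) : constMod.one (k := k) hI hx ≠ 0 :=
  fun h => _root_.one_ne_zero (congrArg (constMod.val hI x) h)

theorem constMod.eq_zero_of_notMem {x : P} (hx : x ∉ I) (v : (constMod k I hI).space x) :
    v = 0 := by
  have hv := (v : constSub k I x).2
  simp only [constSub, hx, if_false, Submodule.mem_bot] at hv
  exact constMod.val_injective hI x (hv.trans (map_zero _).symm)

theorem constMod.val_map_of_mem {x y : P} (h : x ≤ y) (hy : y ∈ I)
    (v : (constMod k I hI).space x) :
    constMod.val hI y ((constMod k I hI).map h v) = constMod.val hI x v := by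
  simp only [constMod.val, constMod, constMap, hy, if_true]
  rfl

theorem constMod.map_one {x y : P} (h : x ≤ y) (hx : x ∈ I) (hy : y ∈ I) :
    (constMod k I hI).map h (constMod.one hI hx) = constMod.one hI hy :=
  constMod.val_injective hI y (by rw [constMod.val_map_of_mem hI h hy]; rfl)

theorem constMod.linearMap_apply_eq_smul {x : P} (hx : x ∈ I)
    (f : (constMod k I hI).space x →ₗ[k] (constMod k I hI).space x)
    (v : (constMod k I hI).space x) :
    f v = constMod.val hI x (f (constMod.one hI hx)) • v := by
  have hv : v = constMod.val hI x v • constMod.one hI hx :=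
    constMod.val_injective hI x (by simp [constMod.val_one])
  conv_lhs => rw [hv]
  rw [map_smul]
  exact constMod.val_injective hI x (by simp [mul_comm])

end ConstMod

section IntervalModules

variable {k}

theorem constMod_endo_eq_smul {I : Set P} (hI : IsPosetInterval I)
    (h : PersHom k (constMod k I hI.2.1) (constMod k I hI.2.1)) :
    ∃ c : k, ∀ x v, h.app x v = c • v := by
  obtain ⟨x₀, hx₀⟩ := hI.1
  let s : I → k := fun x => constMod.val hI.2.1 x (h.app x (constMod.one hI.2.1 x.2))
  have hs : ∀ x y : I, x ≤ y → s x = s y := fun x y hxy => by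
    have := congrArg (constMod.val hI.2.1 y) (h.natural hxy (constMod.one hI.2.1 x.2))
    rw [constMod.map_one hI.2.1 hxy x.2 y.2, constMod.val_map_of_mem hI.2.1 hxy y.2] at this
    exact this.symm
  refine ⟨s ⟨x₀, hx₀⟩, fun x v => ?_⟩
  by_cases hx : x ∈ I
  · rw [constMod.linearMap_apply_eq_smul hI.2.1 hx (h.app x) v]
    exact congrArg (· • v) (hI.2.2.constant hs ⟨x, hx⟩ ⟨x₀, hx₀⟩)
  · simp [constMod.eq_zero_of_notMem hI.2.1 hx v]

theorem constMod_comp_eq_zero_of_not_iso {I J : Set P} (hI : IsPosetInterval I)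
    (hJ : IsPosetInterval J)
    (hIJ : ¬ Nonempty (PersIso k (constMod k I hI.2.1) (constMod k J hJ.2.1)))
    (f : PersHom k (constMod k I hI.2.1) (constMod k J hJ.2.1))
    (g : PersHom k (constMod k J hJ.2.1) (constMod k I hI.2.1)) (x : P)
    (v : (constMod k I hI.2.1).space x) : g.app x (f.app x v) = 0 := by
  obtain ⟨c, hc⟩ := constMod_endo_eq_smul hI (g.comp f)
  obtain ⟨d, hd⟩ := constMod_endo_eq_smul hJ (f.comp g)
  obtain ⟨x₀, hx₀⟩ := hI.1
  by_cases hc0 : c = 0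
  · simpa [hc0] using hc x v
  · exact absurd (PersIso.nonempty_of_comp_eq_smul f g hc0 (by simpa using hc)
      (by simpa using hd) (constMod.one_ne_zero hI.2.1 hx₀)) hIJ

theorem comp_eq_zero_of_not_iso {X : PersMod.{u, v, w} k P} {Y : PersMod.{u, v, w'} k P}
    {Z : PersMod.{u, v, w''} k P} {I : Set P} (hI : IsPosetInterval I)
    (eX : PersIso k X (constMod k I hI.2.1)) (eZ : PersIso k Z (constMod k I hI.2.1))
    (hY : IsIntervalModule k Y) (hYI : ¬ Nonempty (PersIso k Y (constMod k I hI.2.1)))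
    (f : PersHom k X Y) (g : PersHom k Y Z) (x : P) (v : X.space x) :
    g.app x (f.app x v) = 0 := by
  obtain ⟨J, hJ, ⟨eY⟩⟩ := hY
  have hIJ : ¬ Nonempty (PersIso k (constMod k I hI.2.1) (constMod k J hJ.2.1)) :=
    fun ⟨e⟩ => hYI ⟨eY.trans e.symm⟩
  simpa using constMod_comp_eq_zero_of_not_iso hI hJ hIJ (eY.toHom.comp (f.comp eX.symm.toHom))
    (eZ.toHom.comp (g.comp eY.symm.toHom)) x (eX.app x v)

end IntervalModules

namespace IsDecomp

open scoped Classical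

variable {k} {V : PersMod.{u, v, w} k P} {A : Set (PersSubmod k V)}

theorem isInternal (hA : IsDecomp k V A) (x : P) :
    DirectSum.IsInternal (fun U : A => (U : PersSubmod k V).carrier x) :=
  (DirectSum.isInternal_submodule_iff_iSupIndep_and_iSup_eq_top _).mpr (hA x)

variable (hA : IsDecomp k V A)

noncomputable def proj (U : A) (x : P) : V.space x →ₗ[k] V.space x :=
  ((U : PersSubmod k V).carrier x).subtype ∘ₗ
    DirectSum.component k A (fun W : A => (W : PersSubmod k V).carrier x) U ∘ₗ
    (LinearEquiv.ofBijective (DirectSum.coeLinearMap _) (hA.isInternal x)).symm.toLinearMap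

theorem proj_mem (U : A) (x : P) (v : V.space x) :
    hA.proj U x v ∈ (U : PersSubmod k V).carrier x :=
  SetLike.coe_mem _

theorem proj_of_mem {U : A} {x : P} {v : V.space x} (hv : v ∈ (U : PersSubmod k V).carrier x) :
    hA.proj U x v = v :=
  congrArg Subtype.val ((hA.isInternal x).ofBijective_coeLinearMap_of_mem hv)

theorem proj_of_mem_ne {U W : A} (hWU : W ≠ U) {x : P} {v : V.space x}
    (hv : v ∈ (W : PersSubmod k V).carrier x) : hA.proj U x v = 0 :=
  congrArg Subtype.val ((hA.isInternal x).ofBijective_coeLinearMap_of_mem_ne hWU hv)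

theorem proj_natural (U : A) {x y : P} (h : x ≤ y) (v : V.space x) :
    hA.proj U y (V.map h v) = V.map h (hA.proj U x v) := by
  have hv : v ∈ ⨆ W : A, (W : PersSubmod k V).carrier x := by
    rw [(hA x).2]; trivial
  refine Submodule.iSup_induction _ (motive := fun v =>
    hA.proj U y (V.map h v) = V.map h (hA.proj U x v)) hv (fun W u hu => ?_) (by simp)
    (fun u₁ u₂ h₁ h₂ => by simp only [map_add, h₁, h₂])
  have hhu := (W : PersSubmod k V).mapLe h u hu
  by_cases hWU : W = U
  · subst hWU
    rw [hA.proj_of_mem hu, hA.proj_of_mem hhu]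
  · rw [hA.proj_of_mem_ne hWU hu, hA.proj_of_mem_ne hWU hhu, map_zero]

theorem map_eq_zero_of_forall_map_proj_eq_zero {x : P} {M : Type*} [AddCommGroup M]
    [Module k M] (φ : V.space x →ₗ[k] M) {v : V.space x} (h : ∀ U, φ (hA.proj U x v) = 0) :
    φ v = 0 := by
  have hv : DirectSum.coeLinearMap _
      ((LinearEquiv.ofBijective (DirectSum.coeLinearMap _) (hA.isInternal x)).symm v) = v :=
    (LinearEquiv.ofBijective (DirectSum.coeLinearMap _) (hA.isInternal x)).apply_symm_apply v
  rw [← hv, DirectSum.coeLinearMap_eq_dfinsuppSum, DFinsupp.sum, map_sum]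
  exact Finset.sum_eq_zero fun U _ => h U

theorem proj_eq_zero_of_mem_iSup {p : PersSubmod k V → Prop} {U : A} (hU : ¬ p U) {x : P}
    {v : V.space x} (hv : v ∈ ⨆ W : {T : PersSubmod k V // T ∈ A ∧ p T}, W.1.carrier x) :
    hA.proj U x v = 0 := by
  refine (iSup_le fun W w hw => ?_ : _ ≤ LinearMap.ker (hA.proj U x)) hv
  exact hA.proj_of_mem_ne (W := ⟨W.1, W.2.1⟩) (fun h => hU (by rw [← h]; exact W.2.2)) hw

noncomputable def projHom (U : A) : PersHom k V (U : PersSubmod k V).toPersMod where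
  app x := LinearMap.codRestrict _ (hA.proj U x) (hA.proj_mem U x)
  natural h v := Subtype.ext (hA.proj_natural U h v)

end IsDecomp

section TwoDecompositions

variable {k}

theorem IsDecomp.proj_proj_eq_zero_of_mem_iSup {V : PersMod.{u, v, w} k P}
    {A B : Set (PersSubmod k V)} (hA : IsDecomp k V A) (hB : IsDecomp k V B) {I : Set P}
    (hI : IsPosetInterval I) {U₀ : A}
    (hU₀ : Nonempty (PersIso k (U₀ : PersSubmod k V).toPersMod (constMod k I hI.2.1))) {W : B}
    (hW : IsIntervalModule k (W : PersSubmod k V).toPersMod)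
    (hWI : ¬ Nonempty (PersIso k (W : PersSubmod k V).toPersMod (constMod k I hI.2.1))) {x : P}
    {v : V.space x} (hv : v ∈ ⨆ U : {T : PersSubmod k V // T ∈ A ∧
      Nonempty (PersIso k T.toPersMod (constMod k I hI.2.1))}, U.1.carrier x) :
    hA.proj U₀ x (hB.proj W x v) = 0 := by
  obtain ⟨eU₀⟩ := hU₀
  refine (iSup_le fun U u hu => ?_ : _ ≤ LinearMap.ker (hA.proj U₀ x ∘ₗ hB.proj W x)) hv
  obtain ⟨eU⟩ := U.2.2
  have := comp_eq_zero_of_not_iso hI eU eU₀ hW hWI ((hB.projHom W).comp U.1.inclusion)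
    ((hA.projHom U₀).comp (W : PersSubmod k V).inclusion) x ⟨u, hu⟩
  exact congrArg Subtype.val this

end TwoDecompositions

/-- Given two interval decompositions `V = ⊕_{U ∈ A} U = ⊕_{W ∈ B} W` and an interval
`I`, let `C ⊆ A` consist of the summands isomorphic to `M(I)` and `D ⊆ B` of the
summands not isomorphic to `M(I)`.  Then `(⊕_{U ∈ C} U) ∩ (⊕_{W ∈ D} W) = 0`
pointwise. -/
theorem interval_decomp_intersection_eq_bot (P : Type v) [PartialOrder P]
    (V : PersMod.{u, v, w} k P) (A B : Set (PersSubmod k V))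
    (hA : IsIntervalDecomp k V A) (hB : IsIntervalDecomp k V B)
    (I : Set P) (hI : IsPosetInterval I) :
    ∀ x : P,
      (⨆ U : {T : PersSubmod k V // T ∈ A ∧
          Nonempty (PersIso k T.toPersMod (constMod k I hI.2.1))}, U.1.carrier x) ⊓
      (⨆ W : {T : PersSubmod k V // T ∈ B ∧
          ¬ Nonempty (PersIso k T.toPersMod (constMod k I hI.2.1))}, W.1.carrier x)
        = ⊥ := by
  intro x
  refine eq_bot_iff.mpr fun v hv => (Submodule.mem_bot k).mpr ?_
  obtain ⟨hvC, hvD⟩ := Submodule.mem_inf.mp hv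
  refine hA.1.map_eq_zero_of_forall_map_proj_eq_zero LinearMap.id fun U => ?_
  by_cases hU : Nonempty (PersIso k (U : PersSubmod k V).toPersMod (constMod k I hI.2.1))
  · refine hB.1.map_eq_zero_of_forall_map_proj_eq_zero (hA.1.proj U x) fun W => ?_
    by_cases hW : Nonempty (PersIso k (W : PersSubmod k V).toPersMod (constMod k I hI.2.1))
    · rw [hB.1.proj_eq_zero_of_mem_iSup (not_not.mpr hW) hvD, map_zero]
    · exact hA.1.proj_proj_eq_zero_of_mem_iSup hB.1 hI hU (hB.2 W W.2) hW hvC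
  · exact hA.1.proj_eq_zero_of_mem_iSup hU hvC
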